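/- (Lower bound) Let p be a positive proper policy over a finite alphabet 𝒶 with A = |𝒶| ≥ 2, and let n* be any node with cost c = d(n*)/π(n*). Let N̄(n*) = {n ∈ List 𝒶 : d(n)/π(n) ≤ c} and let L'(n*) be the frontier of N̄(n*), i.e. the set of nodes n ∉ N̄(n*) whose parent lies in N̄(n*). Then N̄(n*) and L'(n*) are finite and |N̄(n*)| ≥ (c · Σ_{n ∈ L'(n*)} π(n)/d(n) − 1)/(A − 1). (Equivalently, writing d̄ = 1/Σ_{n∈L'(n*)} π(n)/d(n) for the harmonic mean of the frontier depths, |N̄(n*)| ≥ (c/d̄ − 1)/(A−1).) -/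

import Mathlib

/-!
Since `p ≤ 1`, probabilities can only shrink from a node to its children, so the cost
`d(n)/π(n)` is monotone along the parent map and bounded below by the depth: `N̄` is closed
under taking parents and its depths are at most `c`. Every node of `N̄ ∪ L'` other than the
root is a child of a node of `N̄`, whence `|N̄| + |L'| ≤ A|N̄| + 1`. A frontier node `n` lies
outside `N̄`, i.e. `c · π(n)/d(n) < 1`, so `c · Σ_{L'} π/d ≤ |L'| ≤ (A - 1)|N̄| + 1`.
-/

noncomputable def nodeProb {α : Type*} (p : List α → α → ℝ) (n : List α) : ℝ :=
  ∏ j : Fin n.length, p (n.take j) (n.get j)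

open Set

lemma mul_finsum_mem_le_ncard {ι : Type*} {s : Set ι} (hs : s.Finite) {f : ι → ℝ} {c : ℝ}
    (h : ∀ i ∈ s, c * f i ≤ 1) : c * ∑ᶠ i ∈ s, f i ≤ s.ncard := by
  rw [mul_finsum_mem' _ _ hs, finsum_mem_eq_finite_toFinset_sum _ hs, ncard_eq_toFinset_card _ hs]
  simpa using Finset.sum_le_card_nsmul _ _ 1 fun i hi => h i (hs.mem_toFinset.1 hi)

section SearchTree

variable {α : Type*}

def children (S : Set (List α)) : Set (List α) :=
  (fun x : List α × α => x.1 ++ [x.2]) '' (S ×ˢ univ)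

def nodeFrontier (S : Set (List α)) : Set (List α) :=
  {n | n ∉ S ∧ n.dropLast ∈ S}

lemma append_singleton_injective :
    Function.Injective fun x : List α × α => x.1 ++ [x.2] := by
  rintro ⟨n, a⟩ ⟨m, b⟩ h
  obtain ⟨rfl, h⟩ := List.append_inj' h rfl
  simp_all

lemma ncard_children [Fintype α] (S : Set (List α)) :
    (children S).ncard = S.ncard * Fintype.card α := by
  rw [children, ncard_image_of_injective _ append_singleton_injective, ncard_prod, ncard_univ,
    Nat.card_eq_fintype_card]

lemma Set.Finite.children [Finite α] {S : Set (List α)} (hS : S.Finite) : (children S).Finite :=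
  (hS.prod finite_univ).image _

lemma mem_insert_nil_children {S : Set (List α)} {n : List α} (h : n.dropLast ∈ S) :
    n ∈ insert [] (children S) := by
  rcases eq_or_ne n [] with rfl | hn
  · exact mem_insert _ _
  · exact mem_insert_of_mem _
      ⟨(n.dropLast, n.getLast hn), ⟨h, mem_univ _⟩, List.dropLast_append_getLast hn⟩

lemma union_nodeFrontier_subset {S : Set (List α)} (hS : ∀ n ∈ S, n.dropLast ∈ S) :
    S ∪ nodeFrontier S ⊆ insert [] (children S) := by
  rintro n (hn | hn)
  · exact mem_insert_nil_children (hS n hn)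
  · exact mem_insert_nil_children hn.2

lemma Set.Finite.nodeFrontier [Finite α] {S : Set (List α)} (hS : S.Finite) :
    (nodeFrontier S).Finite :=
  (hS.children.insert []).subset fun _ hn => mem_insert_nil_children hn.2

lemma ncard_add_ncard_nodeFrontier_le [Fintype α] {S : Set (List α)} (hS : S.Finite)
    (hclosed : ∀ n ∈ S, n.dropLast ∈ S) :
    S.ncard + (nodeFrontier S).ncard ≤ S.ncard * Fintype.card α + 1 :=
  calc S.ncard + (nodeFrontier S).ncard
      = (S ∪ nodeFrontier S).ncard :=
        (ncard_union_eq (disjoint_left.2 fun _ hS hF => hF.1 hS) hS hS.nodeFrontier).symm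
    _ ≤ (insert [] (children S)).ncard :=
        ncard_le_ncard (union_nodeFrontier_subset hclosed) (hS.children.insert [])
    _ ≤ (children S).ncard + 1 := ncard_insert_le _ _
    _ = S.ncard * Fintype.card α + 1 := by rw [ncard_children]

lemma nodeProb_append_singleton (p : List α → α → ℝ) (n : List α) (a : α) :
    nodeProb p (n ++ [a]) = nodeProb p n * p n a := by
  rw [nodeProb, ← Fin.prod_congr' _ (by simp : n.length + 1 = (n ++ [a]).length),
    Fin.prod_univ_castSucc]
  simp [nodeProb, List.take_append_of_le_length (Nat.le_of_lt (Fin.is_lt _))]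

variable {p : List α → α → ℝ}

lemma nodeProb_pos (hpos : ∀ n a, 0 < p n a) (n : List α) : 0 < nodeProb p n :=
  Finset.prod_pos fun _ _ => hpos _ _

lemma nodeProb_nonneg (h0 : ∀ n a, 0 ≤ p n a) (n : List α) : 0 ≤ nodeProb p n :=
  Finset.prod_nonneg fun _ _ => h0 _ _

lemma nodeProb_le_one (h0 : ∀ n a, 0 ≤ p n a) (h1 : ∀ n a, p n a ≤ 1) (n : List α) :
    nodeProb p n ≤ 1 :=
  Finset.prod_le_one (fun _ _ => h0 _ _) fun _ _ => h1 _ _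

lemma nodeProb_le_nodeProb_dropLast (h0 : ∀ n a, 0 ≤ p n a) (h1 : ∀ n a, p n a ≤ 1)
    (n : List α) : nodeProb p n ≤ nodeProb p n.dropLast := by
  rcases eq_or_ne n [] with rfl | hn
  · rfl
  · conv_lhs => rw [← List.dropLast_append_getLast hn, nodeProb_append_singleton]
    exact mul_le_of_le_one_right (nodeProb_nonneg h0 _) (h1 _ _)

noncomputable def nodeCost (p : List α → α → ℝ) (n : List α) : ℝ :=
  n.length / nodeProb p n

lemma length_le_nodeCost (hpos : ∀ n a, 0 < p n a) (h1 : ∀ n a, p n a ≤ 1) (n : List α) :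
    (n.length : ℝ) ≤ nodeCost p n :=
  le_div_self (Nat.cast_nonneg _) (nodeProb_pos hpos n)
    (nodeProb_le_one (fun _ _ => (hpos _ _).le) h1 n)

lemma nodeCost_dropLast_le (hpos : ∀ n a, 0 < p n a) (h1 : ∀ n a, p n a ≤ 1) (n : List α) :
    nodeCost p n.dropLast ≤ nodeCost p n :=
  div_le_div₀ (Nat.cast_nonneg _) (by simp) (nodeProb_pos hpos n)
    (nodeProb_le_nodeProb_dropLast (fun _ _ => (hpos _ _).le) h1 n)

lemma finite_setOf_nodeCost_le [Finite α] (hpos : ∀ n a, 0 < p n a) (h1 : ∀ n a, p n a ≤ 1)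
    (c : ℝ) : {n | nodeCost p n ≤ c}.Finite :=
  (List.finite_length_le α ⌊c⌋₊).subset fun n hn =>
    Nat.le_floor ((length_le_nodeCost hpos h1 n).trans hn)

lemma mul_div_length_le_one_of_mem_nodeFrontier (hpos : ∀ n a, 0 < p n a) {c : ℝ} {n : List α}
    (hn : n ∈ nodeFrontier {m | nodeCost p m ≤ c}) : c * (nodeProb p n / n.length) ≤ 1 := by
  obtain ⟨hcost, hparent⟩ := hn
  have hlen : (0 : ℝ) < n.length := by
    rcases eq_or_ne n [] with rfl | hne
    · exact absurd hparent hcost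
    · exact_mod_cast List.length_pos_iff.2 hne
  have hc : c * nodeProb p n < n.length :=
    (lt_div_iff₀ (nodeProb_pos hpos n)).1 (not_le.1 hcost)
  rw [← mul_div_assoc, div_le_one hlen]
  exact hc.le

end SearchTree

theorem lts_lower_bound_general {α : Type*} [Fintype α] [Nonempty α]
    (p : List α → α → ℝ)
    (hpos : ∀ n a, 0 < p n a)
    (hproper : ∀ n, ∑ a : α, p n a = 1)
    (c : ℝ)
    (N L : Set (List α))
    (hN : N = {n : List α | (n.length : ℝ) / nodeProb p n ≤ c})
    (hL : L = {n : List α | n ∉ N ∧ n.dropLast ∈ N}) :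
    N.Finite ∧ L.Finite ∧
      (N.ncard : ℝ)
        ≥ (c * (∑ᶠ n ∈ L, nodeProb p n / (n.length : ℝ)) - 1)
            / ((Fintype.card α : ℝ) - 1) := by
  have hp_le_one : ∀ n a, p n a ≤ 1 := fun n a =>
    hproper n ▸ Finset.single_le_sum (fun b _ => (hpos n b).le) (Finset.mem_univ a)
  obtain rfl : L = nodeFrontier N := hL
  have hNfin : N.Finite := hN ▸ finite_setOf_nodeCost_le hpos hp_le_one c
  have hclosed : ∀ n ∈ N, n.dropLast ∈ N := by
    subst hN
    exact fun n hn => (nodeCost_dropLast_le hpos hp_le_one n).trans hn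
  have hweight : ∀ n ∈ nodeFrontier N, c * (nodeProb p n / n.length) ≤ 1 := by
    subst hN
    exact fun n hn => mul_div_length_le_one_of_mem_nodeFrontier hpos hn
  have hcount : (N.ncard : ℝ) + (nodeFrontier N).ncard ≤ N.ncard * Fintype.card α + 1 := by
    exact_mod_cast ncard_add_ncard_nodeFrontier_le hNfin hclosed
  refine ⟨hNfin, hNfin.nodeFrontier, div_le_of_le_mul₀ ?_ (Nat.cast_nonneg _) ?_⟩
  · exact sub_nonneg.2 (Nat.one_le_cast.2 Fintype.card_pos)
  · linarith [mul_finsum_mem_le_ncard hNfin.nodeFrontier hweight]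

/-- (Lower bound) For a positive proper policy over an alphabet of size
`A ≥ 2` and any node `n*` of cost `c = d(n*)/π(n*)`, the set
`N̄(n*) = {n : d(n)/π(n) ≤ c}` and its frontier
`L'(n*) = {n ∉ N̄(n*) : parent(n) ∈ N̄(n*)}` are finite, and
`|N̄(n*)| ≥ (c · Σ_{n ∈ L'(n*)} π(n)/d(n) − 1)/(A − 1)`. -/
theorem lts_lower_bound {α : Type*} [Fintype α] [Nonempty α]
    (p : List α → α → ℝ)
    (hpos : ∀ n a, 0 < p n a)
    (hproper : ∀ n, ∑ a : α, p n a = 1)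
    (hA : 2 ≤ Fintype.card α)
    (nstar : List α)
    (c : ℝ) (hc : c = (nstar.length : ℝ) / nodeProb p nstar)
    (N L : Set (List α))
    (hN : N = {n : List α | (n.length : ℝ) / nodeProb p n ≤ c})
    (hL : L = {n : List α | n ∉ N ∧ n.dropLast ∈ N}) :
    N.Finite ∧ L.Finite ∧
      (N.ncard : ℝ)
        ≥ (c * (∑ᶠ n ∈ L, nodeProb p n / (n.length : ℝ)) - 1)
            / ((Fintype.card α : ℝ) - 1) :=
  lts_lower_bound_general p hpos hproper c N L hN hL
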